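/- arXiv:1402.1381 — 3 statements merged into one kernel-verified Lean document; each statement's English description precedes it below -/
import Mathlib

section
/- For every smooth compactly supported function ψ : ℝ³ → ℂ, one has ∫_{ℝ³} |ψ(x)|² / (4|x|²) dx ≤ ∫_{ℝ³} |∇ψ(x)|² dx (Hardy's inequality). -/
noncomputable section

open MeasureTheory Set Metric Filter

/-- Physical space `ℝ³`. -/
abbrev E3 : Type := EuclideanSpace ℝ (Fin 3)

section Aux

/-- Cauchy–Schwarz for directional derivatives in coordinates. -/
lemma hardy_dir_cs (D : E3 →L[ℝ] ℂ) (ω : E3) (hω : ‖ω‖ = 1) :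
    ‖D ω‖ ^ 2 ≤ ∑ j : Fin 3, ‖D (EuclideanSpace.single j (1 : ℝ))‖ ^ 2 := by
  have hdecomp : ω = ∑ j : Fin 3, ω j • EuclideanSpace.single j (1 : ℝ) := by
    ext j
    rw [WithLp.ofLp_sum, Finset.sum_apply]
    simp [EuclideanSpace.single_apply]
  have h1 : ‖D ω‖ ≤ ∑ j : Fin 3, |ω j| * ‖D (EuclideanSpace.single j (1 : ℝ))‖ := by
    calc ‖D ω‖ = ‖∑ j : Fin 3, ω j • D (EuclideanSpace.single j (1 : ℝ))‖ := by
          conv_lhs => rw [hdecomp]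
          rw [map_sum]
          congr 1
          exact Finset.sum_congr rfl fun j _ => D.map_smul _ _
      _ ≤ ∑ j : Fin 3, ‖ω j • D (EuclideanSpace.single j (1 : ℝ))‖ := norm_sum_le _ _
      _ = ∑ j : Fin 3, |ω j| * ‖D (EuclideanSpace.single j (1 : ℝ))‖ := by
          simp [norm_smul, Real.norm_eq_abs]
  have hsum : ∑ j : Fin 3, ω j ^ 2 = 1 := by
    have h0 : (1:ℝ) = Real.sqrt (∑ j : Fin 3, ω j ^ 2) := by
      rw [← hω, EuclideanSpace.norm_eq]
      congr 1
      exact Finset.sum_congr rfl fun j _ => by rw [Real.norm_eq_abs, sq_abs]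
    nlinarith [Real.sq_sqrt (Finset.sum_nonneg fun j (_ : j ∈ Finset.univ) => sq_nonneg (ω j)), h0]
  have h2 : (∑ j : Fin 3, |ω j| * ‖D (EuclideanSpace.single j (1 : ℝ))‖) ^ 2 ≤
      (∑ j : Fin 3, ω j ^ 2) * ∑ j : Fin 3, ‖D (EuclideanSpace.single j (1 : ℝ))‖ ^ 2 := by
    have := Finset.sum_mul_sq_le_sq_mul_sq Finset.univ (fun j => |ω j|)
      (fun j => ‖D (EuclideanSpace.single j (1 : ℝ))‖)
    simpa [sq_abs] using this
  calc ‖D ω‖ ^ 2 ≤ (∑ j : Fin 3, |ω j| * ‖D (EuclideanSpace.single j (1 : ℝ))‖) ^ 2 :=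
        pow_le_pow_left₀ (norm_nonneg _) h1 2
    _ ≤ _ := by rw [hsum] at h2; linarith

/-- One-dimensional Hardy-type inequality on `(0, ∞)`. -/
lemma hardy_1d (u : ℝ → ℂ) (hu : ContDiff ℝ (⊤ : ℕ∞) u) (hcs : HasCompactSupport u) :
    ∫ r in Ioi (0:ℝ), ‖u r‖ ^ 2 / 4 ≤ ∫ r in Ioi (0:ℝ), r ^ 2 * ‖deriv u r‖ ^ 2 := by
  have hd : Differentiable ℝ u := hu.differentiable (by simp)
  have hucont : Continuous u := hu.continuous
  have hu' : Continuous (deriv u) := hu.continuous_deriv (by simp)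
  set A : ℝ → ℝ := fun r => 2 * ((starRingEnd ℂ) (u r) * deriv u r).re with hA
  have hAcont : Continuous A := by
    apply continuous_const.mul
    exact (Complex.continuous_re.comp ((Complex.continuous_conj.comp hucont).mul hu'))
  have hφ : ∀ r : ℝ, HasDerivAt (fun s => ‖u s‖ ^ 2) (A r) r := by
    intro r
    have h := (hd r).hasDerivAt
    have hre : HasDerivAt (fun s => (u s).re) ((deriv u r).re) r :=
      (Complex.reCLM.hasFDerivAt.comp_hasDerivAt r h)
    have him : HasDerivAt (fun s => (u s).im) ((deriv u r).im) r :=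
      (Complex.imCLM.hasFDerivAt.comp_hasDerivAt r h)
    have h2 : HasDerivAt (fun s => (u s).re ^ 2 + (u s).im ^ 2)
        (2 * (u r).re * (deriv u r).re + 2 * (u r).im * (deriv u r).im) r := by
      have := (hre.fun_pow 2).fun_add (him.fun_pow 2)
      simpa [mul_comm, mul_assoc, mul_left_comm] using this
    have heq : (fun s => ‖u s‖ ^ 2) = fun s => (u s).re ^ 2 + (u s).im ^ 2 := by
      funext s
      rw [Complex.sq_norm, Complex.normSq_apply]
      ring
    rw [heq]
    convert h2 using 1
    simp [hA, Complex.mul_re]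
    ring
  have hφcs : HasCompactSupport (fun s => ‖u s‖ ^ 2) :=
    hcs.comp_left (g := fun z : ℂ => ‖z‖ ^ 2) (by simp)
  have hAcs : HasCompactSupport A := by
    have h1 : HasCompactSupport (fun s => (starRingEnd ℂ) (u s)) :=
      hcs.comp_left (by simp)
    have h2 : HasCompactSupport (fun s => (starRingEnd ℂ) (u s) * deriv u s) := h1.mul_right
    have h3 : HasCompactSupport (fun s => ((starRingEnd ℂ) (u s) * deriv u s).re) :=
      h2.comp_left (by simp)
    exact h3.mul_left
  have hφint : Integrable (fun s => ‖u s‖ ^ 2) :=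
    (hucont.norm.pow 2).integrable_of_hasCompactSupport hφcs
  have hrAint : Integrable (fun s => s * A s) :=
    (continuous_id.mul hAcont).integrable_of_hasCompactSupport hAcs.mul_left
  have hJint : Integrable (fun s => s ^ 2 * ‖deriv u s‖ ^ 2) := by
    have : HasCompactSupport (fun s => ‖deriv u s‖ ^ 2) :=
      (hcs.deriv).comp_left (g := fun z : ℂ => ‖z‖ ^ 2) (by simp)
    exact ((continuous_pow 2).mul (hu'.norm.pow 2)).integrable_of_hasCompactSupport this.mul_left
  set F : ℝ → ℝ := fun r => r * ‖u r‖ ^ 2 with hF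
  have hFderiv : ∀ x ∈ Ioi (0:ℝ), HasDerivAt F (‖u x‖ ^ 2 + x * A x) x := by
    intro x _
    simpa [hF] using (hasDerivAt_id x).fun_mul (hφ x)
  have hFtop : Tendsto F atTop (nhds 0) := by
    have hFcs : HasCompactSupport F := hφcs.mul_left
    obtain ⟨R, hR⟩ := hFcs.isCompact.isBounded.subset_closedBall 0
    refine Tendsto.congr' ?_ tendsto_const_nhds
    filter_upwards [eventually_gt_atTop (max R 0)] with x hx
    by_contra hne
    have hmem : x ∈ tsupport F := subset_tsupport F (by simpa using fun h => hne h.symm)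
    have h1 := hR hmem
    simp only [Metric.mem_closedBall, Real.dist_eq, sub_zero] at h1
    have hx1 : R < x := lt_of_le_of_lt (le_max_left _ _) hx
    have hx2 : (0:ℝ) < x := lt_of_le_of_lt (le_max_right _ _) hx
    rw [abs_of_pos hx2] at h1
    linarith
  have key : ∫ r in Ioi (0:ℝ), (‖u r‖ ^ 2 + r * A r) = 0 - F 0 := by
    refine integral_Ioi_of_hasDerivAt_of_tendsto ?_ hFderiv ?_ hFtop
    · exact ((continuous_id.mul (hucont.norm.pow 2)).continuousAt).continuousWithinAt
    · exact (hφint.add hrAint).integrableOn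
  have hF0 : F 0 = 0 := by simp [hF]
  rw [hF0, sub_zero] at key
  have hsplit : ∫ r in Ioi (0:ℝ), ‖u r‖ ^ 2 = - ∫ r in Ioi (0:ℝ), r * A r := by
    have h := integral_add (μ := volume.restrict (Ioi (0:ℝ)))
      hφint.integrableOn hrAint.integrableOn
    rw [key] at h
    linarith [h]
  have hbound : ∀ r ∈ Ioi (0:ℝ), -(r * A r) ≤ ‖u r‖ ^ 2 / 2 + 2 * (r ^ 2 * ‖deriv u r‖ ^ 2) := by
    intro r hr
    have hr0 : (0:ℝ) < r := hr
    have h1 : |A r| ≤ 2 * (‖u r‖ * ‖deriv u r‖) := by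
      rw [hA]
      rw [abs_mul, abs_two]
      have : |((starRingEnd ℂ) (u r) * deriv u r).re| ≤ ‖(starRingEnd ℂ) (u r) * deriv u r‖ :=
        Complex.abs_re_le_norm _
      rw [norm_mul, RCLike.norm_conj] at this
      linarith
    have h2 : -(r * A r) ≤ r * |A r| := by
      have := neg_abs_le (A r)
      nlinarith
    have h3 : r * |A r| ≤ 2 * (‖u r‖ * (r * ‖deriv u r‖)) := by nlinarith
    have h4 : 2 * (‖u r‖ * (r * ‖deriv u r‖)) ≤ ‖u r‖ ^ 2 / 2 + 2 * (r ^ 2 * ‖deriv u r‖ ^ 2) := by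
      nlinarith [sq_nonneg (‖u r‖ - 2 * (r * ‖deriv u r‖))]
    linarith
  have hI : ∫ r in Ioi (0:ℝ), ‖u r‖ ^ 2 ≤
      (∫ r in Ioi (0:ℝ), ‖u r‖ ^ 2) / 2 + 2 * ∫ r in Ioi (0:ℝ), r ^ 2 * ‖deriv u r‖ ^ 2 := by
    have hneg : - ∫ r in Ioi (0:ℝ), r * A r = ∫ r in Ioi (0:ℝ), -(r * A r) := by
      rw [integral_neg]
    have hmono : ∫ r in Ioi (0:ℝ), -(r * A r) ≤
        ∫ r in Ioi (0:ℝ), (‖u r‖ ^ 2 / 2 + 2 * (r ^ 2 * ‖deriv u r‖ ^ 2)) := by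
      refine setIntegral_mono_on hrAint.integrableOn.neg ?_ measurableSet_Ioi hbound
      exact ((hφint.div_const 2).add (hJint.const_mul 2)).integrableOn
    have hadd : ∫ r in Ioi (0:ℝ), (‖u r‖ ^ 2 / 2 + 2 * (r ^ 2 * ‖deriv u r‖ ^ 2)) =
        (∫ r in Ioi (0:ℝ), ‖u r‖ ^ 2) / 2 + 2 * ∫ r in Ioi (0:ℝ), r ^ 2 * ‖deriv u r‖ ^ 2 := by
      rw [integral_add (hφint.div_const 2).integrableOn (hJint.const_mul 2).integrableOn,
        integral_div, integral_const_mul]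
    linarith
  have hfin : ∫ r in Ioi (0:ℝ), ‖u r‖ ^ 2 / 4 = (∫ r in Ioi (0:ℝ), ‖u r‖ ^ 2) / 4 := by
    rw [integral_div]
  rw [hfin]
  linarith

/-- Polar-coordinates formula for lower integrals on `ℝ³`. -/
lemma hardy_lintegral_spherical (F : E3 → ENNReal) (hF : Measurable F) :
    ∫⁻ x : E3, F x = ∫⁻ ω : sphere (0:E3) 1, ∫⁻ r in Ioi (0:ℝ),
      ENNReal.ofReal (r ^ 2) * F (r • (ω : E3)) ∂volume ∂((volume : Measure E3).toSphere) := by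
  have hdim : Module.finrank ℝ E3 = 3 := by
    simp [finrank_euclideanSpace]
  set G : sphere (0:E3) 1 × Ioi (0:ℝ) → ENNReal := fun p => F (p.2.1 • p.1.1) with hG
  have hGcont : Continuous fun p : sphere (0:E3) 1 × Ioi (0:ℝ) => (p.2.1 • p.1.1 : E3) :=
    (continuous_subtype_val.comp continuous_snd).smul (continuous_subtype_val.comp continuous_fst)
  have hGmeas : Measurable G := hF.comp hGcont.measurable
  have h1 : ∫⁻ x : E3, F x
      = ∫⁻ x : ({0}ᶜ : Set E3), F x ∂((volume : Measure E3).comap Subtype.val) := by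
    rw [lintegral_subtype_comap (measurableSet_singleton (0:E3)).compl,
      restrict_compl_singleton]
  have h2 : ∫⁻ x : ({0}ᶜ : Set E3), G (homeomorphUnitSphereProd E3 x)
        ∂((volume : Measure E3).comap Subtype.val) =
      ∫⁻ p, G p ∂((volume : Measure E3).toSphere.prod
        (Measure.volumeIoiPow (Module.finrank ℝ E3 - 1))) :=
    (Measure.measurePreserving_homeomorphUnitSphereProd (volume : Measure E3)).lintegral_comp
      hGmeas
  have h2' : ∀ x : ({0}ᶜ : Set E3), G (homeomorphUnitSphereProd E3 x) = F x := by
    intro x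
    have hx : (x : E3) ≠ 0 := x.2
    simp only [hG, homeomorphUnitSphereProd_apply_snd_coe, homeomorphUnitSphereProd_apply_fst_coe]
    rw [smul_inv_smul₀ (norm_ne_zero_iff.2 hx)]
  have h3 : ∫⁻ p, G p ∂((volume : Measure E3).toSphere.prod
        (Measure.volumeIoiPow (Module.finrank ℝ E3 - 1))) =
      ∫⁻ ω : sphere (0:E3) 1, ∫⁻ r : Ioi (0:ℝ), G (ω, r)
        ∂(Measure.volumeIoiPow (Module.finrank ℝ E3 - 1)) ∂((volume : Measure E3).toSphere) :=
    lintegral_prod _ hGmeas.aemeasurable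
  have h4 : ∀ ω : sphere (0:E3) 1, ∫⁻ r : Ioi (0:ℝ), G (ω, r)
        ∂(Measure.volumeIoiPow (Module.finrank ℝ E3 - 1)) =
      ∫⁻ r in Ioi (0:ℝ), ENNReal.ofReal (r ^ 2) * F (r • (ω : E3)) ∂volume := by
    intro ω
    rw [hdim]
    show ∫⁻ r : Ioi (0:ℝ), G (ω, r) ∂(Measure.volumeIoiPow 2) = _
    rw [Measure.volumeIoiPow]
    rw [lintegral_withDensity_eq_lintegral_mul _
      ((measurable_subtype_coe.pow_const 2).ennreal_ofReal)
      (show Measurable fun r : Ioi (0:ℝ) => G (ω, r) from hGmeas.comp measurable_prodMk_left)]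
    exact lintegral_subtype_comap measurableSet_Ioi
      (fun t : ℝ => ENNReal.ofReal (t ^ 2) * F (t • (ω : E3)))
  rw [h1, ← lintegral_congr h2', h2, h3]
  exact lintegral_congr h4

/-- The fiberwise (radial) Hardy inequality. -/
lemma hardy_fiber (ψ : E3 → ℂ) (hsmooth : ContDiff ℝ (⊤ : ℕ∞) ψ) (hsupp : HasCompactSupport ψ)
    (ω : E3) (hω : ‖ω‖ = 1) :
    ∫⁻ r in Ioi (0:ℝ), ENNReal.ofReal (r ^ 2) *
        ENNReal.ofReal (‖ψ (r • ω)‖ ^ 2 / (4 * ‖r • ω‖ ^ 2)) ∂volume ≤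
    ∫⁻ r in Ioi (0:ℝ), ENNReal.ofReal (r ^ 2) *
        ENNReal.ofReal (∑ j : Fin 3,
          ‖fderiv ℝ ψ (r • ω) (EuclideanSpace.single j (1:ℝ))‖ ^ 2) ∂volume := by
  set u : ℝ → ℂ := fun r => ψ (r • ω) with hu
  have hline : ContDiff ℝ (⊤ : ℕ∞) (fun r : ℝ => r • ω) := contDiff_id.smul contDiff_const
  have huc : ContDiff ℝ (⊤ : ℕ∞) u := hsmooth.comp hline
  have hucs : HasCompactSupport u := by
    obtain ⟨R, hR⟩ := hsupp.isCompact.isBounded.subset_closedBall 0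
    apply HasCompactSupport.intro (isCompact_Icc (a := -R) (b := R))
    intro r hr
    show ψ (r • ω) = 0
    apply image_eq_zero_of_notMem_tsupport
    intro hmem
    have h1 := hR hmem
    simp only [Metric.mem_closedBall, dist_zero_right] at h1
    rw [norm_smul, hω, mul_one, Real.norm_eq_abs] at h1
    exact hr (abs_le.mp h1)
  have hderiv : ∀ r : ℝ, HasDerivAt u (fderiv ℝ ψ (r • ω) ω) r := by
    intro r
    have h1 : HasDerivAt (fun s : ℝ => s • ω) ω r := by
      simpa using (hasDerivAt_id r).smul_const ω
    exact ((hsmooth.differentiable (by simp)) (r • ω)).hasFDerivAt.comp_hasDerivAt r h1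
  have hL : ∫⁻ r in Ioi (0:ℝ), ENNReal.ofReal (r ^ 2) *
      ENNReal.ofReal (‖ψ (r • ω)‖ ^ 2 / (4 * ‖r • ω‖ ^ 2)) ∂volume =
      ∫⁻ r in Ioi (0:ℝ), ENNReal.ofReal (‖u r‖ ^ 2 / 4) ∂volume := by
    refine setLIntegral_congr_fun measurableSet_Ioi ?_
    intro r hr
    have hr0 : (0:ℝ) < r := hr
    dsimp only
    rw [norm_smul, hω, mul_one, Real.norm_eq_abs, abs_of_pos hr0]
    rw [← ENNReal.ofReal_mul (sq_nonneg r)]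
    congr 1
    field_simp
    ring
  have hmid : ∫⁻ r in Ioi (0:ℝ), ENNReal.ofReal (‖u r‖ ^ 2 / 4) ∂volume ≤
      ∫⁻ r in Ioi (0:ℝ), ENNReal.ofReal (r ^ 2 * ‖deriv u r‖ ^ 2) ∂volume := by
    have hucont : Continuous u := huc.continuous
    have hu' : Continuous (deriv u) := huc.continuous_deriv (by simp)
    have hint1 : Integrable (fun r => ‖u r‖ ^ 2 / 4) :=
      ((hucont.norm.pow 2).div_const 4).integrable_of_hasCompactSupport
        (hucs.comp_left (g := fun z : ℂ => ‖z‖ ^ 2 / 4) (by simp) :)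
    have hint2 : Integrable (fun r => r ^ 2 * ‖deriv u r‖ ^ 2) := by
      have : HasCompactSupport (fun s => ‖deriv u s‖ ^ 2) :=
        (hucs.deriv).comp_left (g := fun z : ℂ => ‖z‖ ^ 2) (by simp)
      exact ((continuous_pow 2).mul (hu'.norm.pow 2)).integrable_of_hasCompactSupport this.mul_left
    rw [← ofReal_integral_eq_lintegral_ofReal hint1.integrableOn
      (Filter.Eventually.of_forall fun r => by positivity),
      ← ofReal_integral_eq_lintegral_ofReal hint2.integrableOn
      (Filter.Eventually.of_forall fun r => by positivity)]
    exact ENNReal.ofReal_le_ofReal (hardy_1d u huc hucs)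
  have hR2 : ∫⁻ r in Ioi (0:ℝ), ENNReal.ofReal (r ^ 2 * ‖deriv u r‖ ^ 2) ∂volume ≤
      ∫⁻ r in Ioi (0:ℝ), ENNReal.ofReal (r ^ 2) *
        ENNReal.ofReal (∑ j : Fin 3,
          ‖fderiv ℝ ψ (r • ω) (EuclideanSpace.single j (1:ℝ))‖ ^ 2) ∂volume := by
    refine lintegral_mono fun r => ?_
    rw [ENNReal.ofReal_mul (sq_nonneg r)]
    refine mul_le_mul_right (ENNReal.ofReal_le_ofReal ?_) _
    rw [(hderiv r).deriv]
    exact hardy_dir_cs (fderiv ℝ ψ (r • ω)) ω hω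
  rw [hL]
  exact le_trans hmid hR2

end Aux

/-- **Hardy's inequality.** For every smooth compactly supported `ψ : ℝ³ → ℂ`,
`∫ |ψ(x)|² / (4|x|²) dx ≤ ∫ |∇ψ(x)|² dx`, where `|∇ψ|² = Σ_j |∂_j ψ|²`. -/
theorem hardy_inequality (ψ : E3 → ℂ) (hsmooth : ContDiff ℝ (⊤ : ℕ∞) ψ)
    (hsupp : HasCompactSupport ψ) :
    ∫ x : E3, ‖ψ x‖ ^ 2 / (4 * ‖x‖ ^ 2) ≤
      ∫ x : E3, ∑ j : Fin 3, ‖fderiv ℝ ψ x (EuclideanSpace.single j (1 : ℝ))‖ ^ 2 := by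
  set f : E3 → ℝ := fun x => ‖ψ x‖ ^ 2 / (4 * ‖x‖ ^ 2) with hf
  set g : E3 → ℝ :=
    fun x => ∑ j : Fin 3, ‖fderiv ℝ ψ x (EuclideanSpace.single j (1 : ℝ))‖ ^ 2 with hg
  have hdψ : Continuous (fderiv ℝ ψ) := hsmooth.continuous_fderiv (by simp)
  have hgcont : Continuous g := by
    refine continuous_finset_sum _ fun j _ => ?_
    exact ((ContinuousLinearMap.apply ℝ ℂ
      (EuclideanSpace.single j (1:ℝ))).continuous.comp hdψ).norm.pow 2
  have hgcs : HasCompactSupport g := by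
    have hfd : HasCompactSupport (fderiv ℝ ψ) := hsupp.fderiv ℝ
    exact hfd.comp_left
      (g := fun D : E3 →L[ℝ] ℂ => ∑ j : Fin 3, ‖D (EuclideanSpace.single j (1:ℝ))‖ ^ 2)
      (by simp)
  have hgint : Integrable g := hgcont.integrable_of_hasCompactSupport hgcs
  have hg0 : ∀ x, 0 ≤ g x := fun x => Finset.sum_nonneg fun j _ => sq_nonneg _
  have hf0 : ∀ x, 0 ≤ f x := fun x => by positivity
  have hfmeas : Measurable f :=
    ((hsmooth.continuous.norm.pow 2).measurable).div
      ((continuous_const.mul (continuous_norm.pow 2)).measurable)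
  have key : ∫⁻ x, ENNReal.ofReal (f x) ≤ ∫⁻ x, ENNReal.ofReal (g x) := by
    rw [hardy_lintegral_spherical _ hfmeas.ennreal_ofReal,
      hardy_lintegral_spherical _ hgcont.measurable.ennreal_ofReal]
    refine lintegral_mono fun ω => ?_
    exact hardy_fiber ψ hsmooth hsupp ω (mem_sphere_zero_iff_norm.mp ω.2)
  have hgl : ∫⁻ x, ENNReal.ofReal (g x) = ENNReal.ofReal (∫ x, g x) :=
    (ofReal_integral_eq_lintegral_ofReal hgint (Filter.Eventually.of_forall hg0)).symm
  have h1 : ∫ x, f x = (∫⁻ x, ENNReal.ofReal (f x)).toReal :=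
    integral_eq_lintegral_of_nonneg_ae (Filter.Eventually.of_forall hf0)
      hfmeas.aestronglyMeasurable
  have h2 : ∫ x, g x = (∫⁻ x, ENNReal.ofReal (g x)).toReal :=
    integral_eq_lintegral_of_nonneg_ae (Filter.Eventually.of_forall hg0)
      hgcont.measurable.aestronglyMeasurable
  rw [show (∫ x : E3, ‖ψ x‖ ^ 2 / (4 * ‖x‖ ^ 2)) = ∫ x, f x from rfl,
    show (∫ x : E3, ∑ j : Fin 3, ‖fderiv ℝ ψ x (EuclideanSpace.single j (1 : ℝ))‖ ^ 2)
      = ∫ x, g x from rfl, h1, h2]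
  refine ENNReal.toReal_mono ?_ key
  rw [hgl]
  exact ENNReal.ofReal_ne_top

end
end

section
/- Let N ≥ 2 be an integer. For every a > 0 there exists b ≥ 0 such that for every smooth compactly supported ψ : (ℝ³)^N → ℂ, ∫_{(ℝ³)^N} Σ_{1≤i<j≤N} |x_i − x_j|⁻¹ |ψ(x)|² dx ≤ a ∫_{(ℝ³)^N} |∇ψ|² dx + b ∫_{(ℝ³)^N} |ψ|² dx. That is, the Coulomb interaction is form-bounded by the kinetic energy with relative bound zero. -/
noncomputable section

open MeasureTheory

/-- `n`-particle configuration space `(ℝ³)ⁿ`. -/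
abbrev HNSpace (n : ℕ) : Type := PiLp 2 (fun _ : Fin n => E3)

instance (n : ℕ) : MeasurableSpace (HNSpace n) :=
  MeasurableSpace.comap WithLp.ofLp (inferInstanceAs (MeasurableSpace (∀ _ : Fin n, E3)))

instance (n : ℕ) : BorelSpace (HNSpace n) :=
  inferInstanceAs (BorelSpace (PiLp 2 (fun _ : Fin n => E3)))

/-- Coulomb interaction `Σ_{i<j} |x_i - x_j|⁻¹`. -/
def coulomb {n : ℕ} (x : HNSpace n) : ℝ :=
  ∑ i : Fin n, ∑ j : Fin n, if i < j then ‖x i - x j‖⁻¹ else 0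

/-- Squared pointwise gradient `|∇ψ|² = Σ_{i,j} |∂_{ij} ψ|²` (full `3n`-dimensional gradient). -/
def gradSq {n : ℕ} (ψ : HNSpace n → ℂ) (x : HNSpace n) : ℝ :=
  ∑ i : Fin n, ∑ j : Fin 3,
    ‖fderiv ℝ ψ x (WithLp.toLp 2 (Pi.single i (EuclideanSpace.single j (1 : ℝ))))‖ ^ 2

lemma cs_abs (a b c d : ℝ) :
    |2*(a*c+b*d)| ≤ 2*(Real.sqrt (a*a+b*b) * Real.sqrt (c*c+d*d)) := by
  rw [abs_mul, abs_two]
  have : |a*c+b*d| ≤ Real.sqrt (a*a+b*b) * Real.sqrt (c*c+d*d) := by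
    rw [← Real.sqrt_mul (by nlinarith [mul_self_nonneg a, mul_self_nonneg b])]
    apply Real.abs_le_sqrt
    nlinarith [sq_nonneg (a*d - b*c)]
  linarith

lemma amgm {ε p q : ℝ} (hε : 0 < ε) : 2*(p*q) ≤ ε*q^2 + ε⁻¹*p^2 := by
  have h1 : 0 < ε⁻¹ := by positivity
  have h2 : ε * ε⁻¹ = 1 := mul_inv_cancel₀ hε.ne'
  nlinarith [sq_nonneg (ε*q - p), mul_nonneg h1.le (sq_nonneg (ε*q - p))]

lemma integral_fderiv_apply_eq_zero {X : Type*} [NormedAddCommGroup X] [NormedSpace ℝ X]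
    [MeasurableSpace X] [BorelSpace X] [FiniteDimensional ℝ X] {μ : Measure X}
    [μ.IsAddHaarMeasure] {h : X → ℝ} (hd : ContDiff ℝ (⊤ : ℕ∞) h) (hc : HasCompactSupport h)
    (v : X) : ∫ x, fderiv ℝ h x v ∂μ = 0 := by
  have hdc : Continuous fun x => fderiv ℝ h x v :=
    (ContinuousLinearMap.apply ℝ ℝ v).continuous.comp (hd.fderiv_right (m := (⊤ : ℕ∞)) (by simp)).continuous
  have hcs : HasCompactSupport fun x => fderiv ℝ h x v :=
    (hc.fderiv ℝ).comp_left (g := fun T : X →L[ℝ] ℝ => T v) rfl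
  have key := integral_mul_fderiv_eq_neg_fderiv_mul_of_integrable
    (μ := μ) (f := fun _ => (1:ℝ)) (g := h) (v := v)
    (by simpa [fderiv_fun_const] using (integrable_zero X ℝ μ))
    (by simpa using hdc.integrable_of_hasCompactSupport hcs)
    (by simpa using (hd.continuous.integrable_of_hasCompactSupport hc))
    (fun x _ => differentiable_const (1:ℝ) x) (fun x _ => hd.differentiable (by simp) x)
  simpa [fderiv_fun_const] using key

/-- The coordinate functional `x ↦ (x i - x j) k`. -/
def Wmap {N : ℕ} (i j : Fin N) (k : Fin 3) : HNSpace N →L[ℝ] ℝ :=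
  (EuclideanSpace.proj k).comp
    ((PiLp.proj (𝕜 := ℝ) 2 (fun _ : Fin N => E3) i) - (PiLp.proj (𝕜 := ℝ) 2 (fun _ : Fin N => E3) j))

lemma Wmap_apply {N : ℕ} (i j : Fin N) (k : Fin 3) (x : HNSpace N) :
    Wmap i j k x = (x i - x j) k := by
  simp [Wmap, EuclideanSpace.proj]

lemma Wmap_single {N : ℕ} {i j : Fin N} (hij : i ≠ j) (k l : Fin 3) :
    Wmap i j k ((WithLp.toLp 2 (Pi.single i (EuclideanSpace.single l (1:ℝ)))) : HNSpace N)
      = if l = k then 1 else 0 := by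
  rw [Wmap_apply]
  have h1 : (WithLp.toLp 2 (Pi.single i (EuclideanSpace.single l (1:ℝ))) : HNSpace N) i
      = EuclideanSpace.single l (1:ℝ) := Pi.single_eq_same _ _
  have h2 : (WithLp.toLp 2 (Pi.single i (EuclideanSpace.single l (1:ℝ))) : HNSpace N) j = 0 :=
    Pi.single_eq_of_ne (Ne.symm hij) _
  rw [h1, h2, sub_zero, EuclideanSpace.single_apply]
  simp [eq_comm]

lemma sum_Wmap_sq {N : ℕ} (i j : Fin N) (x : HNSpace N) :
    ∑ k : Fin 3, Wmap i j k x * Wmap i j k x = ‖x i - x j‖^2 := by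
  have := EuclideanSpace.norm_eq (x i - x j)
  rw [this, Real.sq_sqrt (by positivity)]
  refine Finset.sum_congr rfl fun k _ => ?_
  rw [Wmap_apply]
  have : ‖(x i - x j) k‖ = |(x i - x j) k| := rfl
  rw [this, sq_abs]
  ring

lemma master_arith (st δc u : ℝ) (w U B : Fin 3 → ℝ) (hst : 0 < st)
    (hsq : st^2 = (∑ k, w k * w k) + δc) (hδc : 0 ≤ δc) (hu : 0 ≤ u)
    (hw : ∀ k, |w k| ≤ st) (hUB : ∀ k, |U k| ≤ B k) :
    u * (2 / st) ≤ (∑ k : Fin 3, ((u * w k) * ((-(1 / (2 * st)) / st ^ 2) * (2 * w k))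
        + st⁻¹ * (u * 1 + w k * U k))) + ∑ k : Fin 3, B k := by
  set m : ℝ := -(1 / (2 * st)) / st ^ 2 with hm
  have hm_neg : m ≤ 0 := by
    rw [hm]; apply div_nonpos_of_nonpos_of_nonneg
    · simp only [neg_nonpos]; positivity
    · positivity
  have hk : ∀ k : Fin 3, 2*m*u*(w k*w k) + st⁻¹*u - B k ≤
      (u * w k) * (m * (2 * w k)) + st⁻¹ * (u * 1 + w k * U k) := by
    intro k
    have h1 : |st⁻¹ * (w k * U k)| ≤ B k := by
      rw [abs_mul, abs_mul, abs_of_nonneg (by positivity : (0:ℝ) ≤ st⁻¹)]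
      calc st⁻¹ * (|w k| * |U k|) ≤ st⁻¹ * (st * |U k|) := by
            apply mul_le_mul_of_nonneg_left (by apply mul_le_mul_of_nonneg_right (hw k) (abs_nonneg _)) (by positivity)
        _ = |U k| := by field_simp
        _ ≤ B k := hUB k
    have h2 : -(B k) ≤ st⁻¹ * (w k * U k) := neg_le_of_abs_le h1
    nlinarith [h2]
  have hsum := Finset.sum_le_sum (fun k (_ : k ∈ Finset.univ) => hk k)
  have hwsum : ∑ k : Fin 3, w k * w k = st^2 - δc := by linarith
  have hleft : ∑ k : Fin 3, (2*m*u*(w k*w k) + st⁻¹*u - B k)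
      = 2*m*u*(st^2 - δc) + 3*(st⁻¹*u) - ∑ k : Fin 3, B k := by
    have : ∀ k : Fin 3, 2*m*u*(w k*w k) + st⁻¹*u - B k
        = (2*m*u)*(w k*w k) + (st⁻¹*u - B k) := fun k => by ring
    simp only [this]
    rw [Finset.sum_add_distrib, ← Finset.mul_sum, hwsum, Finset.sum_sub_distrib]
    simp [Finset.sum_const]
    ring
  rw [hleft] at hsum
  have hm3 : 2*m*st^2 = -(1/st) := by
    rw [hm]; field_simp
  have hfinal : u * (2 / st) ≤ 2*m*u*(st^2 - δc) + 3*(st⁻¹*u) := by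
    have e1 : 2*m*u*(st^2 - δc) = (2*m*st^2)*u - 2*m*u*δc := by ring
    rw [e1, hm3]
    have e2 : -2*m*u*δc ≥ 0 := by
      have := mul_nonneg (mul_nonneg (neg_nonneg.2 hm_neg) hu) hδc
      nlinarith [this]
    have e3 : -(1/st)*u + 3*(st⁻¹*u) = u * (2/st) := by
      field_simp; ring
    nlinarith [e2, e3]
  linarith

lemma norm_complex_eq (z : ℂ) : ‖z‖ = Real.sqrt (z.re*z.re + z.im*z.im) := by
  rw [Complex.norm_def, Complex.normSq_apply]

lemma pair_bound_delta {N : ℕ} {ψ : HNSpace N → ℂ} (hψ : ContDiff ℝ (⊤ : ℕ∞) ψ)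
    (hcs : HasCompactSupport ψ) {i j : Fin N} (hij : i ≠ j) {ε δ : ℝ} (hε : 0 < ε) (hδ : 0 < δ) :
    ∫ x : HNSpace N, ‖ψ x‖^2 * (2 / Real.sqrt (‖x i - x j‖^2 + δ^2)) ≤
      ∫ x : HNSpace N, (ε * gradSq ψ x + 3 * ε⁻¹ * ‖ψ x‖^2) := by
  classical
  set u : HNSpace N → ℝ := fun x => ‖ψ x‖^2 with hu_def
  set q : HNSpace N → ℝ := fun x => (∑ k : Fin 3, Wmap i j k x * Wmap i j k x) + δ^2 with hq_def
  have hq_eq : ∀ x, q x = ‖x i - x j‖^2 + δ^2 := fun x => by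
    rw [hq_def]; simp only; rw [sum_Wmap_sq]
  have hqpos : ∀ x, 0 < q x := fun x => by rw [hq_eq]; positivity
  have hspos : ∀ x, 0 < Real.sqrt (q x) := fun x => Real.sqrt_pos.2 (hqpos x)
  have hssq : ∀ x, Real.sqrt (q x) ^ 2 = q x := fun x => Real.sq_sqrt (hqpos x).le
  have hWle : ∀ (k : Fin 3) x, |Wmap i j k x| ≤ Real.sqrt (q x) := by
    intro k x
    rw [← Real.sqrt_mul_self_eq_abs]
    apply Real.sqrt_le_sqrt
    have h1 : Wmap i j k x * Wmap i j k x ≤ ∑ l : Fin 3, Wmap i j l x * Wmap i j l x :=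
      Finset.single_le_sum (f := fun l => Wmap i j l x * Wmap i j l x)
        (fun l _ => mul_self_nonneg _) (Finset.mem_univ k)
    have h2 : (∑ l : Fin 3, Wmap i j l x * Wmap i j l x) + δ^2 = q x := by rw [hq_def]
    nlinarith [sq_nonneg δ]
  set v : Fin 3 → HNSpace N := fun k => (WithLp.toLp 2 (Pi.single i (EuclideanSpace.single k (1:ℝ))) : HNSpace N) with hv_def
  -- u facts
  have hu_eq : u = fun x => (ψ x).re * (ψ x).re + (ψ x).im * (ψ x).im := by
    funext x
    rw [hu_def]
    simp only
    rw [norm_complex_eq, Real.sq_sqrt (by nlinarith [mul_self_nonneg (ψ x).re, mul_self_nonneg (ψ x).im])]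
  have hre : ContDiff ℝ (⊤ : ℕ∞) (fun x : HNSpace N => (ψ x).re) := Complex.reCLM.contDiff.comp hψ
  have him : ContDiff ℝ (⊤ : ℕ∞) (fun x : HNSpace N => (ψ x).im) := Complex.imCLM.contDiff.comp hψ
  have hu_cd : ContDiff ℝ (⊤ : ℕ∞) u := by rw [hu_eq]; exact (hre.mul hre).add (him.mul him)
  have hu_cs : HasCompactSupport u := hcs.comp_left (g := fun z : ℂ => ‖z‖^2) (by simp)
  have hu_nonneg : ∀ x, 0 ≤ u x := fun x => sq_nonneg _
  -- h k
  set h : Fin 3 → HNSpace N → ℝ :=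
    fun k x => (u x * Wmap i j k x) * (Real.sqrt (q x))⁻¹ with hh_def
  have hq_cd : ContDiff ℝ (⊤ : ℕ∞) q := by
    apply ContDiff.add _ contDiff_const
    exact ContDiff.sum (fun l _ => ((Wmap i j l).contDiff.mul (Wmap i j l).contDiff))
  have hsinv_cd : ContDiff ℝ (⊤ : ℕ∞) (fun x => (Real.sqrt (q x))⁻¹) := by
    rw [contDiff_iff_contDiffAt]
    intro x
    exact (((Real.contDiffAt_sqrt (hqpos x).ne').comp x hq_cd.contDiffAt).inv (hspos x).ne')
  have hh_cd : ∀ k, ContDiff ℝ (⊤ : ℕ∞) (h k) := fun k =>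
    ((hu_cd.mul (Wmap i j k).contDiff).mul hsinv_cd)
  have hh_cs : ∀ k, HasCompactSupport (h k) := fun k => ((hu_cs.mul_right).mul_right)
  have hIBP : ∀ k, ∫ x, fderiv ℝ (h k) x (v k) = 0 := fun k =>
    integral_fderiv_apply_eq_zero (hh_cd k) (hh_cs k) (v k)
  -- derivative data
  set A : (x : HNSpace N) → (HNSpace N →L[ℝ] ℂ) := fun x => fderiv ℝ ψ x with hA_def
  set Uc : (x : HNSpace N) → (HNSpace N →L[ℝ] ℝ) := fun x =>
    (((ψ x).re • (Complex.reCLM.comp (A x)) + (ψ x).re • (Complex.reCLM.comp (A x)))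
      + ((ψ x).im • (Complex.imCLM.comp (A x)) + (ψ x).im • (Complex.imCLM.comp (A x)))) with hUc_def
  have hu' : ∀ x, HasFDerivAt u (Uc x) x := by
    intro x
    have hA : HasFDerivAt ψ (A x) x := (hψ.differentiable (by simp) x).hasFDerivAt
    have hre' : HasFDerivAt (fun x : HNSpace N => (ψ x).re) (Complex.reCLM.comp (A x)) x :=
      (Complex.reCLM.hasFDerivAt).comp x hA
    have him' : HasFDerivAt (fun x : HNSpace N => (ψ x).im) (Complex.imCLM.comp (A x)) x :=
      (Complex.imCLM.hasFDerivAt).comp x hA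
    rw [hu_eq]
    exact (hre'.mul hre').add (him'.mul him')
  set QD : (x : HNSpace N) → (HNSpace N →L[ℝ] ℝ) := fun x =>
    (∑ l : Fin 3, (Wmap i j l x • (Wmap i j l) + Wmap i j l x • (Wmap i j l))) with hQD_def
  have hq' : ∀ x, HasFDerivAt q (QD x) x := by
    intro x
    apply HasFDerivAt.add_const
    exact HasFDerivAt.fun_sum (fun l _ => ((Wmap i j l).hasFDerivAt.mul (Wmap i j l).hasFDerivAt))
  have hsinv' : ∀ x, HasFDerivAt (fun x => (Real.sqrt (q x))⁻¹)
      ((-(1 / (2 * Real.sqrt (q x))) / Real.sqrt (q x) ^ 2) • (QD x)) x := by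
    intro x
    have h1 : HasDerivAt (fun t => (Real.sqrt t)⁻¹)
        (-(1 / (2 * Real.sqrt (q x))) / Real.sqrt (q x) ^ 2) (q x) :=
      (Real.hasDerivAt_sqrt (hqpos x).ne').inv (hspos x).ne'
    exact h1.comp_hasFDerivAt x (hq' x)
  have hh' : ∀ x k, HasFDerivAt (h k)
      ((u x * Wmap i j k x) • ((-(1 / (2 * Real.sqrt (q x))) / Real.sqrt (q x) ^ 2) • (QD x))
        + (Real.sqrt (q x))⁻¹ • (u x • (Wmap i j k) + Wmap i j k x • (Uc x))) x :=
    fun x k => ((hu' x).mul (Wmap i j k).hasFDerivAt).mul (hsinv' x)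
  have hQDv : ∀ x k, (QD x) (v k) = 2 * Wmap i j k x := by
    intro x k
    rw [hQD_def, hv_def]
    simp only [ContinuousLinearMap.coe_sum', Finset.sum_apply, ContinuousLinearMap.add_apply,
      ContinuousLinearMap.coe_smul', Pi.smul_apply, smul_eq_mul, Wmap_single hij]
    simp [mul_ite, ite_mul, Finset.sum_ite_eq]
    simp only [← two_mul, mul_ite, mul_zero]
    rw [Finset.sum_ite_eq]
    simp
  have hUv : ∀ x k, (Uc x) (v k)
      = 2*((ψ x).re * ((A x) (v k)).re + (ψ x).im * ((A x) (v k)).im) := by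
    intro x k
    rw [hUc_def]
    simp only [ContinuousLinearMap.add_apply, ContinuousLinearMap.coe_smul', Pi.smul_apply,
      ContinuousLinearMap.coe_comp', Function.comp_apply, smul_eq_mul, Complex.reCLM_apply,
      Complex.imCLM_apply]
    ring
  have hval : ∀ x k, fderiv ℝ (h k) x (v k)
      = (u x * Wmap i j k x) * ((-(1 / (2 * Real.sqrt (q x))) / Real.sqrt (q x) ^ 2) * (2 * Wmap i j k x))
        + (Real.sqrt (q x))⁻¹ * (u x * 1 + Wmap i j k x * ((Uc x) (v k))) := by
    intro x k
    haveI : ContinuousSMul ℝ (HNSpace N) := inferInstance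
    rw [(hh' x k).fderiv]
    have hWvk : (Wmap i j k) (v k) = 1 := by
      rw [hv_def]; exact (Wmap_single hij k k).trans (if_pos rfl)
    simp only [ContinuousLinearMap.add_apply, ContinuousLinearMap.smul_apply, smul_eq_mul,
      hQDv x k, hWvk]
  -- pointwise master inequality
  have master : ∀ x, u x * (2 / Real.sqrt (q x)) ≤
      (∑ k : Fin 3, fderiv ℝ (h k) x (v k)) + (ε * gradSq ψ x + 3 * ε⁻¹ * u x) := by
    intro x
    have hB : ∀ k : Fin 3, |(Uc x) (v k)| ≤ ε * ‖(A x) (v k)‖^2 + ε⁻¹ * u x := by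
      intro k
      rw [hUv x k]
      have h1 := cs_abs (ψ x).re (ψ x).im ((A x) (v k)).re ((A x) (v k)).im
      rw [← norm_complex_eq, ← norm_complex_eq] at h1
      have h2 := amgm (ε := ε) (p := ‖ψ x‖) (q := ‖(A x) (v k)‖) hε
      have h3 : ε⁻¹ * ‖ψ x‖^2 = ε⁻¹ * u x := by rw [hu_def]
      calc |2 * ((ψ x).re * ((A x) (v k)).re + (ψ x).im * ((A x) (v k)).im)|
          ≤ 2 * (‖ψ x‖ * ‖(A x) (v k)‖) := h1
        _ ≤ ε * ‖(A x) (v k)‖^2 + ε⁻¹ * ‖ψ x‖^2 := h2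
        _ = ε * ‖(A x) (v k)‖^2 + ε⁻¹ * u x := by rw [h3]
    have hsum_gs : ∑ k : Fin 3, ‖(A x) (v k)‖^2 ≤ gradSq ψ x := by
      have hle := Finset.single_le_sum
        (f := fun i' : Fin N => ∑ k : Fin 3,
          ‖fderiv ℝ ψ x (WithLp.toLp 2 (Pi.single i' (EuclideanSpace.single k (1:ℝ))))‖^2)
        (fun i' _ => Finset.sum_nonneg fun k _ => sq_nonneg _) (Finset.mem_univ i)
      unfold gradSq
      simp only [hA_def, hv_def]
      exact hle
    have key := master_arith (Real.sqrt (q x)) (δ^2) (u x) (fun k => Wmap i j k x)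
        (fun k => (Uc x) (v k)) (fun k => ε * ‖(A x) (v k)‖^2 + ε⁻¹ * u x) (hspos x)
        (by rw [hssq x, hq_def]) (sq_nonneg δ) (hu_nonneg x) (fun k => hWle k x) hB
    have e : ∑ k : Fin 3, fderiv ℝ (h k) x (v k)
        = ∑ k : Fin 3, ((u x * Wmap i j k x) *
            ((-(1 / (2 * Real.sqrt (q x))) / Real.sqrt (q x) ^ 2) * (2 * Wmap i j k x))
          + (Real.sqrt (q x))⁻¹ * (u x * 1 + Wmap i j k x * ((Uc x) (v k)))) :=
      Finset.sum_congr rfl fun k _ => hval x k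
    have eB : ∑ k : Fin 3, (ε * ‖(A x) (v k)‖^2 + ε⁻¹ * u x)
        = ε * (∑ k : Fin 3, ‖(A x) (v k)‖^2) + 3 * (ε⁻¹ * u x) := by
      rw [Finset.sum_add_distrib, ← Finset.mul_sum]
      simp [Finset.sum_const]
    have hmono : ε * (∑ k : Fin 3, ‖(A x) (v k)‖^2) ≤ ε * gradSq ψ x :=
      mul_le_mul_of_nonneg_left hsum_gs hε.le
    rw [e]
    rw [eB] at key
    linarith [key, hmono]
  -- integrability
  have hs_cont : Continuous fun x => Real.sqrt (q x) := Real.continuous_sqrt.comp hq_cd.continuous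
  have hlhs_cont : Continuous fun x => u x * (2 / Real.sqrt (q x)) :=
    hu_cd.continuous.mul (continuous_const.div hs_cont (fun x => (hspos x).ne'))
  have hlhs_cs : HasCompactSupport fun x => u x * (2 / Real.sqrt (q x)) := hu_cs.mul_right
  have hlhs_int : Integrable (fun x => u x * (2 / Real.sqrt (q x))) :=
    hlhs_cont.integrable_of_hasCompactSupport hlhs_cs
  have hder_int : ∀ k : Fin 3, Integrable (fun x => fderiv ℝ (h k) x (v k)) := by
    intro k
    have hccont : Continuous fun x => fderiv ℝ (h k) x (v k) :=
      (ContinuousLinearMap.apply ℝ ℝ (v k)).continuous.comp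
        ((hh_cd k).fderiv_right (m := (⊤ : ℕ∞)) (by simp)).continuous
    have hccs : HasCompactSupport fun x => fderiv ℝ (h k) x (v k) :=
      ((hh_cs k).fderiv ℝ).comp_left (g := fun T : HNSpace N →L[ℝ] ℝ => T (v k)) rfl
    exact hccont.integrable_of_hasCompactSupport hccs
  have hgs_cont : Continuous (gradSq ψ) := by
    unfold gradSq
    apply continuous_finset_sum
    intro i' _
    apply continuous_finset_sum
    intro k _
    exact (((ContinuousLinearMap.apply ℝ ℂ _).continuous.comp
      (hψ.fderiv_right (m := (⊤ : ℕ∞)) (by simp)).continuous).norm).pow 2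
  have hgs_cs : HasCompactSupport (gradSq ψ) := by
    have hcl := (hcs.fderiv ℝ).comp_left
      (g := fun T : HNSpace N →L[ℝ] ℂ => ∑ i' : Fin N, ∑ k : Fin 3,
        ‖T (WithLp.toLp 2 (Pi.single i' (EuclideanSpace.single k (1:ℝ))))‖^2) (by simp)
    exact hcl
  have hR_int : Integrable (fun x => ε * gradSq ψ x + 3 * ε⁻¹ * u x) := by
    apply Integrable.add
    · exact ((continuous_const.mul hgs_cont).integrable_of_hasCompactSupport hgs_cs.mul_left)
    · exact ((continuous_const.mul hu_cd.continuous).integrable_of_hasCompactSupport hu_cs.mul_left)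
  have hsum_int : Integrable (fun x => ∑ k : Fin 3, fderiv ℝ (h k) x (v k)) :=
    integrable_finset_sum _ (fun k _ => hder_int k)
  have hbig := integral_mono hlhs_int (hsum_int.add hR_int) master
  rw [integral_add' hsum_int hR_int, integral_finset_sum _ (fun k _ => hder_int k)] at hbig
  simp only [hIBP, Finset.sum_const_zero, zero_add] at hbig
  simp only [← hq_eq]
  exact hbig

lemma pair_bound {N : ℕ} {ψ : HNSpace N → ℂ} (hψ : ContDiff ℝ (⊤ : ℕ∞) ψ)
    (hcs : HasCompactSupport ψ) {i j : Fin N} (hij : i ≠ j) {ε : ℝ} (hε : 0 < ε) :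
    2 * ∫⁻ x : HNSpace N, ENNReal.ofReal (‖x i - x j‖⁻¹ * ‖ψ x‖^2) ≤
      ENNReal.ofReal (∫ x : HNSpace N, (ε * gradSq ψ x + 3 * ε⁻¹ * ‖ψ x‖^2)) := by
  classical
  set C : ℝ := ∫ x : HNSpace N, (ε * gradSq ψ x + 3 * ε⁻¹ * ‖ψ x‖^2) with hC_def
  have hr_cont : Continuous fun x : HNSpace N => ‖x i - x j‖ :=
    (((PiLp.proj (𝕜 := ℝ) 2 (fun _ : Fin N => E3) i).continuous).sub
      ((PiLp.proj (𝕜 := ℝ) 2 (fun _ : Fin N => E3) j).continuous)).norm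
  have hu_cont : Continuous fun x : HNSpace N => ‖ψ x‖^2 := (hψ.continuous.norm).pow 2
  have hu_cs : HasCompactSupport fun x : HNSpace N => ‖ψ x‖^2 :=
    hcs.comp_left (g := fun z : ℂ => ‖z‖^2) (by simp)
  set f : ℕ → HNSpace N → ENNReal := fun m x =>
    ENNReal.ofReal (‖ψ x‖^2 * (2 / Real.sqrt (‖x i - x j‖^2 + ((1:ℝ)/(m+1))^2))) with hf_def
  have hδpos : ∀ m : ℕ, (0:ℝ) < 1/(m+1) := fun m => by positivity
  have hsqrtpos : ∀ (m : ℕ) (x : HNSpace N),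
      0 < Real.sqrt (‖x i - x j‖^2 + ((1:ℝ)/(m+1))^2) := fun m x =>
    Real.sqrt_pos.2 (by positivity)
  have hstep : ∀ m : ℕ, ∫⁻ x, f m x ≤ ENNReal.ofReal C := by
    intro m
    have hint := pair_bound_delta hψ hcs hij hε (hδpos m)
    have hcont : Continuous fun x : HNSpace N =>
        ‖ψ x‖^2 * (2 / Real.sqrt (‖x i - x j‖^2 + ((1:ℝ)/(m+1))^2)) := by
      apply hu_cont.mul
      apply continuous_const.div
      · exact Real.continuous_sqrt.comp ((hr_cont.pow 2).add continuous_const)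
      · exact fun x => (hsqrtpos m x).ne'
    have hintg : Integrable (fun x : HNSpace N =>
        ‖ψ x‖^2 * (2 / Real.sqrt (‖x i - x j‖^2 + ((1:ℝ)/(m+1))^2))) :=
      hcont.integrable_of_hasCompactSupport hu_cs.mul_right
    have heq := ofReal_integral_eq_lintegral_ofReal hintg
      (Filter.Eventually.of_forall fun x => by positivity)
    rw [hf_def]
    simp only
    rw [← heq]
    exact ENNReal.ofReal_le_ofReal hint
  have hmono : Monotone f := by
    intro m m' hmm x
    rw [hf_def]
    simp only
    apply ENNReal.ofReal_le_ofReal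
    apply mul_le_mul_of_nonneg_left _ (sq_nonneg _)
    apply div_le_div_of_nonneg_left (by norm_num) (hsqrtpos m' x)
    apply Real.sqrt_le_sqrt
    have : (1:ℝ)/(m'+1) ≤ 1/(m+1) := by
      apply div_le_div_of_nonneg_left (by norm_num) (by positivity)
      exact_mod_cast by exact_mod_cast Nat.succ_le_succ hmm
    nlinarith [hδpos m', hδpos m]
  have hmeas : ∀ m, Measurable (f m) := by
    intro m
    apply ENNReal.measurable_ofReal.comp
    apply Continuous.measurable
    apply hu_cont.mul
    apply continuous_const.div
    · exact Real.continuous_sqrt.comp ((hr_cont.pow 2).add continuous_const)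
    · exact fun x => (hsqrtpos m x).ne'
  -- null set
  have hnull : volume {x : HNSpace N | x i - x j = 0} = 0 := by
    set L := (PiLp.proj (𝕜 := ℝ) 2 (fun _ : Fin N => E3) i) -
      (PiLp.proj (𝕜 := ℝ) 2 (fun _ : Fin N => E3) j) with hL_def
    have hLx : ∀ x : HNSpace N, L x = x i - x j := fun x => by rw [hL_def]; rfl
    have hker : {x : HNSpace N | x i - x j = 0} = ((LinearMap.ker (L : HNSpace N →ₗ[ℝ] E3)) : Set (HNSpace N)) := by
      ext x
      simp [LinearMap.mem_ker, hLx x]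
    rw [hker]
    apply Measure.addHaar_submodule
    intro htop
    have h1 : ((WithLp.toLp 2 (Pi.single i (EuclideanSpace.single (0 : Fin 3) (1:ℝ)))) : HNSpace N) ∈
        LinearMap.ker (L : HNSpace N →ₗ[ℝ] E3) := htop ▸ Submodule.mem_top
    rw [LinearMap.mem_ker] at h1
    have h2 := Wmap_single (N := N) hij 0 0
    rw [Wmap_apply] at h2
    have h3 : (WithLp.toLp 2 (Pi.single i (EuclideanSpace.single (0 : Fin 3) (1:ℝ))) : HNSpace N) i -
        (WithLp.toLp 2 (Pi.single i (EuclideanSpace.single (0 : Fin 3) (1:ℝ))) : HNSpace N) j = 0 := by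
      rw [← hLx]; exact h1
    rw [h3] at h2
    simp at h2
  have hae : ∀ᵐ x : HNSpace N, x i - x j ≠ 0 := by
    rw [ae_iff]
    simpa using hnull
  have haesup : (fun x : HNSpace N => ENNReal.ofReal (‖ψ x‖^2 * (2 / ‖x i - x j‖)))
      =ᵐ[volume] fun x => ⨆ m, f m x := by
    filter_upwards [hae] with x hx
    have hr : 0 < ‖x i - x j‖ := norm_pos_iff.2 hx
    have hδ0 : Filter.Tendsto (fun m : ℕ => (1:ℝ)/(m+1)) Filter.atTop (nhds 0) :=
      tendsto_one_div_add_atTop_nhds_zero_nat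
    have htend : Filter.Tendsto (fun m : ℕ => ‖ψ x‖^2 * (2 / Real.sqrt (‖x i - x j‖^2 + ((1:ℝ)/(m+1))^2)))
        Filter.atTop (nhds (‖ψ x‖^2 * (2 / ‖x i - x j‖))) := by
      have h1 : Filter.Tendsto (fun m : ℕ => ‖x i - x j‖^2 + ((1:ℝ)/(m+1))^2)
          Filter.atTop (nhds (‖x i - x j‖^2 + 0^2)) :=
        tendsto_const_nhds.add (hδ0.pow 2)
      have h2 : Filter.Tendsto (fun m : ℕ => Real.sqrt (‖x i - x j‖^2 + ((1:ℝ)/(m+1))^2))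
          Filter.atTop (nhds ‖x i - x j‖) := by
        have := (Real.continuous_sqrt.continuousAt (x := ‖x i - x j‖^2 + 0^2)).tendsto.comp h1
        simpa [Real.sqrt_sq hr.le, Function.comp_def] using this
      exact tendsto_const_nhds.mul (tendsto_const_nhds.div h2 hr.ne')
    have hmx : Monotone fun m => f m x := fun m m' hmm => hmono hmm x
    have h1 : Filter.Tendsto (fun m => f m x) Filter.atTop
        (nhds (ENNReal.ofReal (‖ψ x‖^2 * (2 / ‖x i - x j‖)))) :=
      (ENNReal.tendsto_ofReal htend)
    exact (tendsto_nhds_unique (tendsto_atTop_iSup hmx) h1).symm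
  have hMCT : ∫⁻ x, ENNReal.ofReal (‖ψ x‖^2 * (2 / ‖x i - x j‖)) ≤ ENNReal.ofReal C := by
    rw [lintegral_congr_ae haesup, lintegral_iSup hmeas hmono]
    exact iSup_le hstep
  -- conclude
  have hptwise : ∀ x : HNSpace N, ENNReal.ofReal (‖ψ x‖^2 * (2 / ‖x i - x j‖))
      = 2 * ENNReal.ofReal (‖x i - x j‖⁻¹ * ‖ψ x‖^2) := by
    intro x
    have : ‖ψ x‖^2 * (2 / ‖x i - x j‖) = 2 * (‖x i - x j‖⁻¹ * ‖ψ x‖^2) := by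
      rw [div_eq_mul_inv]; ring
    rw [this, ENNReal.ofReal_mul (by norm_num)]
    norm_num
  calc 2 * ∫⁻ x, ENNReal.ofReal (‖x i - x j‖⁻¹ * ‖ψ x‖^2)
      = ∫⁻ x, 2 * ENNReal.ofReal (‖x i - x j‖⁻¹ * ‖ψ x‖^2) :=
        (lintegral_const_mul' 2 _ (by simp)).symm
    _ = ∫⁻ x, ENNReal.ofReal (‖ψ x‖^2 * (2 / ‖x i - x j‖)) := by
        apply lintegral_congr
        intro x
        rw [hptwise x]
    _ ≤ ENNReal.ofReal C := hMCT

lemma norm_sub_cont {N : ℕ} (i j : Fin N) :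
    Continuous fun x : HNSpace N => ‖x i - x j‖ :=
  (((PiLp.proj (𝕜 := ℝ) 2 (fun _ : Fin N => E3) i).continuous).sub
    ((PiLp.proj (𝕜 := ℝ) 2 (fun _ : Fin N => E3) j).continuous)).norm

lemma coulomb_nonneg {N : ℕ} (x : HNSpace N) : 0 ≤ coulomb x := by
  apply Finset.sum_nonneg
  intro i _
  apply Finset.sum_nonneg
  intro j _
  split_ifs
  · positivity
  · exact le_refl 0

lemma coulomb_meas {N : ℕ} : Measurable (coulomb (n := N)) := by
  apply Finset.measurable_sum
  intro i _
  apply Finset.measurable_sum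
  intro j _
  split_ifs
  · exact (norm_sub_cont i j).measurable.inv
  · exact measurable_const

lemma gradSq_nonneg {N : ℕ} (ψ : HNSpace N → ℂ) (x : HNSpace N) : 0 ≤ gradSq ψ x := by
  unfold gradSq; exact Finset.sum_nonneg fun i _ => Finset.sum_nonneg fun k _ => sq_nonneg _

lemma gradSq_cont {N : ℕ} {ψ : HNSpace N → ℂ} (hψ : ContDiff ℝ (⊤ : ℕ∞) ψ) :
    Continuous (gradSq ψ) := by
  unfold gradSq
  apply continuous_finset_sum
  intro i' _
  apply continuous_finset_sum
  intro k _
  exact (((ContinuousLinearMap.apply ℝ ℂ _).continuous.comp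
    (hψ.fderiv_right (m := (⊤ : ℕ∞)) (by simp)).continuous).norm).pow 2

lemma gradSq_cs {N : ℕ} {ψ : HNSpace N → ℂ} (hcs : HasCompactSupport ψ) :
    HasCompactSupport (gradSq ψ) := by
  have hcl := (hcs.fderiv ℝ).comp_left
    (g := fun T : HNSpace N →L[ℝ] ℂ => ∑ i' : Fin N, ∑ k : Fin 3,
      ‖T (WithLp.toLp 2 (Pi.single i' (EuclideanSpace.single k (1:ℝ))))‖^2) (by simp)
  exact hcl

/-- **The Coulomb interaction is form-bounded by the kinetic energy with relative bound zero.**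
For `N = n + 2 ≥ 2` particles: for every `a > 0` there is `b ≥ 0` such that for every smooth
compactly supported `ψ : (ℝ³)^N → ℂ`,
`∫ Σ_{i<j} |x_i - x_j|⁻¹ |ψ|² ≤ a ∫ |∇ψ|² + b ∫ |ψ|²`. -/
theorem coulomb_form_bounded_relative_bound_zero (n : ℕ) (a : ℝ) (ha : 0 < a) :
    ∃ b : ℝ, 0 ≤ b ∧ ∀ ψ : HNSpace (n + 2) → ℂ, ContDiff ℝ (⊤ : ℕ∞) ψ → HasCompactSupport ψ →
      ∫ x : HNSpace (n + 2), coulomb x * ‖ψ x‖ ^ 2 ≤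
        a * (∫ x : HNSpace (n + 2), gradSq ψ x) +
          b * (∫ x : HNSpace (n + 2), ‖ψ x‖ ^ 2) := by
  classical
  set N : ℕ := n + 2 with hN_def
  have hNR : (0:ℝ) < (N:ℝ) := by positivity
  refine ⟨3 * ((N:ℝ)^2)^2 / (4*a), by positivity, ?_⟩
  intro ψ hψ hcs
  set ε : ℝ := 2*a/(N:ℝ)^2 with hε_def
  have hε : 0 < ε := by rw [hε_def]; positivity
  set Ig : ℝ := ∫ x : HNSpace N, gradSq ψ x with hIg_def
  set Iu : ℝ := ∫ x : HNSpace N, ‖ψ x‖^2 with hIu_def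
  -- integrability
  have hu_cont : Continuous fun x : HNSpace N => ‖ψ x‖^2 := (hψ.continuous.norm).pow 2
  have hu_cs : HasCompactSupport fun x : HNSpace N => ‖ψ x‖^2 :=
    hcs.comp_left (g := fun z : ℂ => ‖z‖^2) (by simp)
  have hu_int : Integrable (fun x : HNSpace N => ‖ψ x‖^2) :=
    hu_cont.integrable_of_hasCompactSupport hu_cs
  have hg_int : Integrable (gradSq ψ) :=
    (gradSq_cont hψ).integrable_of_hasCompactSupport (gradSq_cs hcs)
  have hIg_nonneg : 0 ≤ Ig := integral_nonneg (gradSq_nonneg ψ)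
  have hIu_nonneg : 0 ≤ Iu := integral_nonneg (fun x => sq_nonneg _)
  -- the constant C
  set C : ℝ := ∫ x : HNSpace N, (ε * gradSq ψ x + 3 * ε⁻¹ * ‖ψ x‖^2) with hC_def
  have hC_eq : C = ε * Ig + (3 * ε⁻¹) * Iu := by
    rw [hC_def, integral_add ((hg_int.const_mul ε)) (hu_int.const_mul (3 * ε⁻¹)),
      integral_const_mul, integral_const_mul]
  have hC_nonneg : 0 ≤ C := by
    rw [hC_eq]
    have : 0 < ε⁻¹ := by positivity
    positivity
  -- per pair bound in ENNReal
  have hpair : ∀ i j : Fin N, i < j →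
      ∫⁻ x : HNSpace N, ENNReal.ofReal (‖x i - x j‖⁻¹ * ‖ψ x‖^2) ≤ ENNReal.ofReal C / 2 := by
    intro i j hij
    rw [ENNReal.le_div_iff_mul_le (by norm_num) (by norm_num), mul_comm]
    exact pair_bound hψ hcs (ne_of_lt hij) hε
  -- pointwise decomposition
  have hterm_nonneg : ∀ (i j : Fin N) (x : HNSpace N),
      0 ≤ (if i < j then ‖x i - x j‖⁻¹ else 0) * ‖ψ x‖^2 := by
    intro i j x
    apply mul_nonneg _ (sq_nonneg _)
    split_ifs
    · positivity
    · exact le_refl 0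
  have hptwise : ∀ x : HNSpace N, ENNReal.ofReal (coulomb x * ‖ψ x‖^2)
      = ∑ i : Fin N, ∑ j : Fin N,
          ENNReal.ofReal ((if i < j then ‖x i - x j‖⁻¹ else 0) * ‖ψ x‖^2) := by
    intro x
    have h1 : coulomb x * ‖ψ x‖^2
        = ∑ i : Fin N, ∑ j : Fin N, (if i < j then ‖x i - x j‖⁻¹ else 0) * ‖ψ x‖^2 := by
      unfold coulomb
      rw [Finset.sum_mul]
      exact Finset.sum_congr rfl fun i _ => Finset.sum_mul _ _ _
    rw [h1, ENNReal.ofReal_sum_of_nonneg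
      (fun i _ => Finset.sum_nonneg fun j _ => hterm_nonneg i j x)]
    exact Finset.sum_congr rfl fun i _ => ENNReal.ofReal_sum_of_nonneg
      (fun j _ => hterm_nonneg i j x)
  have hterm_meas : ∀ i j : Fin N, Measurable fun x : HNSpace N =>
      ENNReal.ofReal ((if i < j then ‖x i - x j‖⁻¹ else 0) * ‖ψ x‖^2) := by
    intro i j
    apply ENNReal.measurable_ofReal.comp
    apply Measurable.mul _ hu_cont.measurable
    split_ifs
    · exact (norm_sub_cont i j).measurable.inv
    · exact measurable_const
  have hkey : ∫⁻ x : HNSpace N, ENNReal.ofReal (coulomb x * ‖ψ x‖^2)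
      ≤ ENNReal.ofReal (a * Ig + 3 * ((N:ℝ)^2)^2 / (4*a) * Iu) := by
    calc ∫⁻ x : HNSpace N, ENNReal.ofReal (coulomb x * ‖ψ x‖^2)
        = ∫⁻ x : HNSpace N, ∑ i : Fin N, ∑ j : Fin N,
            ENNReal.ofReal ((if i < j then ‖x i - x j‖⁻¹ else 0) * ‖ψ x‖^2) :=
          lintegral_congr hptwise
      _ = ∑ i : Fin N, ∑ j : Fin N, ∫⁻ x : HNSpace N,
            ENNReal.ofReal ((if i < j then ‖x i - x j‖⁻¹ else 0) * ‖ψ x‖^2) := by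
          rw [lintegral_finset_sum _ (fun i _ => Finset.measurable_sum _ (fun j _ => hterm_meas i j))]
          exact Finset.sum_congr rfl fun i _ =>
            lintegral_finset_sum _ (fun j _ => hterm_meas i j)
      _ ≤ ∑ _i : Fin N, ∑ _j : Fin N, ENNReal.ofReal C / 2 := by
          apply Finset.sum_le_sum
          intro i _
          apply Finset.sum_le_sum
          intro j _
          by_cases hij : i < j
          · simp only [if_pos hij]
            exact hpair i j hij
          · simp only [if_neg hij, zero_mul, ENNReal.ofReal_zero, lintegral_const, zero_mul]
            exact zero_le
      _ = (N : ENNReal) * ((N : ENNReal) * (ENNReal.ofReal C / 2)) := by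
          simp [Finset.sum_const, Finset.card_univ]
      _ = ENNReal.ofReal ((N:ℝ) * ((N:ℝ) * (C / 2))) := by
          rw [ENNReal.ofReal_mul (by positivity), ENNReal.ofReal_mul (by positivity),
            ENNReal.ofReal_div_of_pos (by norm_num), ENNReal.ofReal_natCast,
            ENNReal.ofReal_ofNat]
      _ = ENNReal.ofReal (a * Ig + 3 * ((N:ℝ)^2)^2 / (4*a) * Iu) := by
          congr 1
          rw [hC_eq, hε_def]
          field_simp
          ring
  -- conclude in ℝ
  have hLHSeq : ∫ x : HNSpace N, coulomb x * ‖ψ x‖^2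
      = (∫⁻ x : HNSpace N, ENNReal.ofReal (coulomb x * ‖ψ x‖^2)).toReal := by
    apply integral_eq_lintegral_of_nonneg_ae
    · exact Filter.Eventually.of_forall fun x => mul_nonneg (coulomb_nonneg x) (sq_nonneg _)
    · exact (coulomb_meas.mul hu_cont.measurable).aestronglyMeasurable
  rw [hLHSeq]
  apply ENNReal.toReal_le_of_le_ofReal _ hkey
  have hb : (0:ℝ) ≤ 3 * ((N:ℝ)^2)^2 / (4*a) := by positivity
  have := mul_nonneg hb hIu_nonneg
  nlinarith [mul_nonneg ha.le hIg_nonneg]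

end
end

section
/- Let X be a real vector space and Y a vector space of linear functionals on X that separates the points of X; equip X with the weak topology σ(X,Y) and X × ℝ with the product topology. Let f : X → [0,∞] be proper (not identically +∞). Define f*(ζ) = sup_{x∈X} (ζ(x) − f(x)) for ζ ∈ Y, and f**(x) = sup_{ζ∈Y} (ζ(x) − f*(ζ)) (with the convention t − (+∞) = −∞). Then the epigraph of f** equals the closed convex hull of the epigraph of f: {(x,t) : f**(x) ≤ t} = closure of the convex hull of {(x,t) : f(x) ≤ t}. -/
/-!
`⊇`: the epigraph of `f**` is the intersection over `ζ ∈ Y` of the closed convex sets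
`{(x, t) | ζ x - f* ζ ≤ t}`, each of which contains the epigraph of `f` by the Fenchel–Young
inequality `ζ x - f* ζ ≤ f x`.

`⊆`: by Hahn–Banach in the locally convex space `σ(X, Y) × ℝ`, a point `(x₀, t₀)` outside the
closed convex hull of the epigraph satisfies `ℓ x + c t < u < ℓ x₀ + c t₀` on the epigraph, for some
`u` and a continuous functional `(x, t) ↦ ℓ x + c t`; here `ℓ ∈ Y` because `Y` is the dual of
`σ(X, Y)`. As the epigraph is nonempty and upward closed, `c ≤ 0`. If `c < 0`, dividing by `-c`
gives an affine minorant `ℓ' - β` of `f` with `t₀ < ℓ' x₀ - β`, so `t₀ < f** x₀`. If `c = 0`,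
since `f ≥ 0` every `n (ℓ - u)` is an affine minorant of `f`, and for large `n` it exceeds `t₀`
at `x₀`.
-/

open scoped ENNReal

namespace EReal

theorem coe_sub_le_coe_iff {a c : ℝ} {b : EReal} :
    (a : EReal) - b ≤ c ↔ ((a - c : ℝ) : EReal) ≤ b := by
  rw [EReal.sub_le_iff_le_add (.inr (coe_ne_top c)) (.inr (coe_ne_bot c)), coe_sub,
    EReal.sub_le_iff_le_add (.inl (coe_ne_bot c)) (.inl (coe_ne_top c)), add_comm]

theorem coe_sub_sub_le (a : ℝ) (b : EReal) : (a : EReal) - ((a : EReal) - b) ≤ b := by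
  induction b using EReal.rec with
  | bot => simp
  | coe b => exact_mod_cast (sub_sub_cancel a b).le
  | top => exact le_top

end EReal

section Epigraph

variable {E : Type*} [AddCommGroup E] [Module ℝ E]

theorem setOf_coe_sub_le_eq_preimage (ℓ : E →ₗ[ℝ] ℝ) (b : EReal) :
    {q : E × ℝ | (ℓ q.1 : EReal) - b ≤ q.2} =
      (ℓ ∘ₗ LinearMap.fst ℝ E ℝ - LinearMap.snd ℝ E ℝ) ⁻¹' ((↑) ⁻¹' Set.Iic b) := by
  ext q
  simp [EReal.coe_sub_le_coe_iff]

theorem convex_setOf_coe_sub_le (ℓ : E →ₗ[ℝ] ℝ) (b : EReal) :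
    Convex ℝ {q : E × ℝ | (ℓ q.1 : EReal) - b ≤ q.2} := by
  rw [setOf_coe_sub_le_eq_preimage]
  refine Set.OrdConnected.convex ⟨fun _ _ _ hy _ hz => ?_⟩ |>.linear_preimage _
  exact (EReal.coe_le_coe_iff.2 hz.2).trans hy

theorem isClosed_setOf_coe_sub_le [TopologicalSpace E] (ℓ : E →ₗ[ℝ] ℝ) (hℓ : Continuous ℓ)
    (b : EReal) : IsClosed {q : E × ℝ | (ℓ q.1 : EReal) - b ≤ q.2} := by
  rw [setOf_coe_sub_le_eq_preimage]
  exact (isClosed_Iic.preimage continuous_coe_real_ereal).preimage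
    ((hℓ.comp continuous_fst).sub continuous_snd)

variable {ι : Type*}

theorem convex_setOf_iSup_coe_sub_le (ℓ : ι → E →ₗ[ℝ] ℝ) (b : ι → EReal) :
    Convex ℝ {q : E × ℝ | ⨆ i, (ℓ i q.1 : EReal) - b i ≤ q.2} := by
  simpa only [iSup_le_iff, Set.ofPred_forall] using
    convex_iInter fun i => convex_setOf_coe_sub_le (ℓ i) (b i)

theorem isClosed_setOf_iSup_coe_sub_le [TopologicalSpace E] (ℓ : ι → StrongDual ℝ E)
    (b : ι → EReal) : IsClosed {q : E × ℝ | ⨆ i, (ℓ i q.1 : EReal) - b i ≤ q.2} := by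
  simpa only [iSup_le_iff, Set.ofPred_forall, ContinuousLinearMap.coe_coe] using
    isClosed_iInter fun i => isClosed_setOf_coe_sub_le (ℓ i : E →ₗ[ℝ] ℝ) (ℓ i).continuous (b i)

end Epigraph

section Conjugate

variable {X ι : Type*}

theorem iSup_coe_sub_iSup_coe_sub_le (φ : ι → X → ℝ) (g : X → EReal) (x : X) :
    ⨆ i, ((φ i x : EReal) - ⨆ y, ((φ i y : EReal) - g y)) ≤ g x :=
  iSup_le fun i => (EReal.sub_le_sub le_rfl (le_iSup (fun y => (φ i y : EReal) - g y) x)).trans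
    (EReal.coe_sub_sub_le _ _)

theorem iSup_coe_sub_coe_ennreal_le {f : X → ℝ≥0∞} {φ : X → ℝ} {β : ℝ}
    (h : ∀ p : X × ℝ, ((f p.1 : ℝ≥0∞) : EReal) ≤ p.2 → φ p.1 - p.2 ≤ β) :
    ⨆ x, ((φ x : EReal) - f x) ≤ β := by
  refine iSup_le fun x => ?_
  by_cases hx : f x = ⊤
  · simp [hx]
  · rw [← EReal.coe_ennreal_toReal hx]
    exact_mod_cast h (x, (f x).toReal) (EReal.coe_ennreal_toReal hx).ge

end Conjugate

section Separation

theorem nonpos_of_forall_add_mul_lt {a c u s₀ : ℝ} (h : ∀ s ≥ s₀, a + s * c < u) : c ≤ 0 := by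
  by_contra! hc
  have hlt := h (max s₀ ((u - a) / c)) (le_max_left _ _)
  have hle := (div_le_iff₀ hc).1 (le_max_right s₀ ((u - a) / c))
  linarith

variable {E : Type*}

theorem exists_affine_minorant_of_separated {S : Set (E × ℝ)} (hS : ∀ p ∈ S, 0 ≤ p.2)
    {φ : E → ℝ} {c u : ℝ} (hc : c ≤ 0) (hsep : ∀ p ∈ S, φ p.1 + p.2 * c < u)
    {x₀ : E} {t₀ : ℝ} (h₀ : u < φ x₀ + t₀ * c) :
    ∃ a β : ℝ, (∀ p ∈ S, a * φ p.1 - p.2 ≤ β) ∧ t₀ < a * φ x₀ - β := by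
  rcases hc.lt_or_eq with hc | rfl
  · have hc' : 0 < -c := neg_pos.2 hc
    have key : ∀ x t, (-c)⁻¹ * φ x - t - u * (-c)⁻¹ = (φ x + t * c - u) / (-c) := by
      intro x t
      field_simp [hc.ne]
      ring
    refine ⟨(-c)⁻¹, u * (-c)⁻¹, fun p hp => ?_, ?_⟩
    · have hle := div_nonpos_of_nonpos_of_nonneg (sub_nonpos.2 (hsep p hp).le) hc'.le
      linarith [key p.1 p.2]
    · have hpos := div_pos (sub_pos.2 h₀) hc'
      linarith [key x₀ t₀]
  · simp only [mul_zero, add_zero] at hsep h₀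
    obtain ⟨n, hn⟩ := exists_nat_gt (t₀ / (φ x₀ - u))
    refine ⟨n, n * u, fun p hp => ?_, ?_⟩
    · nlinarith [hsep p hp, hS p hp, n.cast_nonneg (α := ℝ)]
    · rw [div_lt_iff₀ (sub_pos.2 h₀)] at hn
      linarith

variable [TopologicalSpace E] [AddCommGroup E] [Module ℝ E] [IsTopologicalAddGroup E]
  [ContinuousSMul ℝ E] [LocallyConvexSpace ℝ E]

theorem exists_affine_minorant_of_notMem_closure_convexHull {S : Set (E × ℝ)}
    (hne : S.Nonempty) (hup : ∀ p ∈ S, ∀ s ≥ p.2, (p.1, s) ∈ S) (hS : ∀ p ∈ S, 0 ≤ p.2)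
    {x₀ : E} {t₀ : ℝ} (h : (x₀, t₀) ∉ closure (convexHull ℝ S)) :
    ∃ (ℓ : StrongDual ℝ E) (β : ℝ), (∀ p ∈ S, ℓ p.1 - p.2 ≤ β) ∧ t₀ < ℓ x₀ - β := by
  obtain ⟨g, u, hg, hu⟩ :=
    geometric_hahn_banach_closed_point (convex_convexHull ℝ S).closure isClosed_closure h
  set ℓ := g.comp (ContinuousLinearMap.inl ℝ E ℝ)
  have hg_apply : ∀ p, g p = ℓ p.1 + p.2 * g (0, 1) := fun p => by
    rw [← g.comp_inl_add_comp_inr p, ← smul_eq_mul, ← map_smul]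
    simp [ℓ]
  have hsep : ∀ p ∈ S, ℓ p.1 + p.2 * g (0, 1) < u := fun p hp =>
    hg_apply p ▸ hg p (subset_closure (subset_convexHull ℝ S hp))
  have hc : g (0, 1) ≤ 0 := by
    obtain ⟨p, hp⟩ := hne
    exact nonpos_of_forall_add_mul_lt (a := ℓ p.1) (u := u) fun s hs =>
      hsep (p.1, s) (hup p hp s hs)
  obtain ⟨a, β, hβ, ht⟩ := exists_affine_minorant_of_separated hS hc hsep (hg_apply _ ▸ hu)
  exact ⟨a • ℓ, β, hβ, ht⟩

theorem setOf_iSup_sub_le_eq_closure_convexHull {ι : Type*} (ℓ : ι → StrongDual ℝ E)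
    (hℓ : Function.Surjective ℓ) (f : E → ℝ≥0∞) (hf : ∃ x, f x ≠ ⊤) :
    {p : E × ℝ | ⨆ i, ((ℓ i p.1 : EReal) - ⨆ x, ((ℓ i x : EReal) - f x)) ≤ p.2} =
      closure (convexHull ℝ {p : E × ℝ | ((f p.1 : ℝ≥0∞) : EReal) ≤ p.2}) := by
  apply subset_antisymm
  · rintro ⟨x₀, t₀⟩ (hp : _ ≤ (t₀ : EReal))
    by_contra hout
    obtain ⟨x, hx⟩ := hf
    obtain ⟨g, β, hβ, ht⟩ := exists_affine_minorant_of_notMem_closure_convexHull (h := hout)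
      ⟨(x, (f x).toReal), (EReal.coe_ennreal_toReal hx).ge⟩
      (fun p (hp : (f p.1 : EReal) ≤ p.2) s hs => hp.trans (EReal.coe_le_coe_iff.2 hs))
      (fun p (hp : (f p.1 : EReal) ≤ p.2) =>
        EReal.coe_nonneg.1 ((EReal.coe_ennreal_nonneg _).trans hp))
    obtain ⟨i, rfl⟩ := hℓ g
    refine not_le.2 ?_ hp
    calc (t₀ : EReal) < (ℓ i x₀ : EReal) - β := mod_cast ht
      _ ≤ (ℓ i x₀ : EReal) - ⨆ x, ((ℓ i x : EReal) - f x) :=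
        EReal.sub_le_sub le_rfl (iSup_coe_sub_coe_ennreal_le hβ)
      _ ≤ _ := le_iSup (fun j => (ℓ j x₀ : EReal) - ⨆ x, ((ℓ j x : EReal) - f x)) i
  · refine closure_minimal (convexHull_min (fun p hp => ?_) ?_) ?_
    · exact (iSup_coe_sub_iSup_coe_sub_le (fun i => ℓ i) _ p.1).trans hp
    · exact convex_setOf_iSup_coe_sub_le (fun i => (ℓ i : E →ₗ[ℝ] ℝ)) _
    · exact isClosed_setOf_iSup_coe_sub_le ℓ _

end Separation

theorem epi_biconjugate_eq_closure_convexHull_general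
    (X : Type*) [AddCommGroup X] [Module ℝ X]
    (Y : Submodule ℝ (X →ₗ[ℝ] ℝ))
    (f : X → ℝ≥0∞) (hproper : ∃ x, f x ≠ ⊤)
    (fstar : Y → EReal)
    (hfstar : ∀ ζ : Y, fstar ζ = ⨆ x : X, ((ζ.1 x : EReal) - ((f x : ℝ≥0∞) : EReal)))
    (fbistar : X → EReal)
    (hfbistar : ∀ x : X, fbistar x = ⨆ ζ : Y, ((ζ.1 x : EReal) - fstar ζ)) :
    {p : X × ℝ | fbistar p.1 ≤ (p.2 : EReal)} =
      @closure (X × ℝ)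
        (@instTopologicalSpaceProd X ℝ
          (TopologicalSpace.induced (fun (x : X) (ζ : Y) => ζ.1 x) inferInstance)
          inferInstance)
        (convexHull ℝ {p : X × ℝ | ((f p.1 : ℝ≥0∞) : EReal) ≤ (p.2 : EReal)}) := by
  obtain rfl := funext hfbistar
  obtain rfl := funext hfstar
  let B : X →ₗ[ℝ] Y →ₗ[ℝ] ℝ := Y.subtype.flip
  -- Instance search misses these: `↥Y` reaches `AddCommMonoid` along two paths.
  have : IsTopologicalAddGroup (WeakBilin B) :=
    @WeakBilin.instIsTopologicalAddGroup ℝ X Y _ _ _ _ _ _ B _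
  have : LocallyConvexSpace ℝ (WeakBilin B) := @WeakBilin.locallyConvexSpace ℝ X Y _ _ _ _ _ _ _ _ B
  exact setOf_iSup_sub_le_eq_closure_convexHull (E := WeakBilin B) (WeakBilin.eval B)
    (@LinearMap.dualEmbedding_surjective ℝ X Y _ _ _ _ _ B) f hproper

/-- **Fenchel biconjugation.** Let `X` be a real vector space and `Y` a point-separating
vector space of linear functionals on `X`; equip `X` with the weak topology `σ(X,Y)` and
`X × ℝ` with the product topology.  For a proper `f : X → [0,∞]`, the epigraph of the
biconjugate `f**` is the closed convex hull of the epigraph of `f`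
(with the conventions of `EReal` arithmetic, in which `t - (+∞) = -∞`). -/
theorem epi_biconjugate_eq_closure_convexHull
    (X : Type*) [AddCommGroup X] [Module ℝ X]
    (Y : Submodule ℝ (X →ₗ[ℝ] ℝ))
    (hsep : ∀ x : X, x ≠ 0 → ∃ ζ ∈ Y, ζ x ≠ 0)
    (f : X → ℝ≥0∞) (hproper : ∃ x, f x ≠ ⊤)
    (fstar : Y → EReal)
    (hfstar : ∀ ζ : Y, fstar ζ = ⨆ x : X, ((ζ.1 x : EReal) - ((f x : ℝ≥0∞) : EReal)))
    (fbistar : X → EReal)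
    (hfbistar : ∀ x : X, fbistar x = ⨆ ζ : Y, ((ζ.1 x : EReal) - fstar ζ)) :
    {p : X × ℝ | fbistar p.1 ≤ (p.2 : EReal)} =
      @closure (X × ℝ)
        (@instTopologicalSpaceProd X ℝ
          (TopologicalSpace.induced (fun (x : X) (ζ : Y) => ζ.1 x) inferInstance)
          inferInstance)
        (convexHull ℝ {p : X × ℝ | ((f p.1 : ℝ≥0∞) : EReal) ≤ (p.2 : EReal)}) :=
  epi_biconjugate_eq_closure_convexHull_general X Y f hproper fstar hfstar fbistar hfbistar
end
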